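/- Let I ≥ 2 and J ≥ 0, and for each j = 0,1,…,J let ρ_j(x) = sup_{q ∈ Θ_I} { −qᵀx − α_j(q) }, where α_j(q) = Σ_{i=1}^I A_{i,j}(q_i), A_{i,j}(p) = ∫₀^p f_{i,j}(s) ds, and each f_{i,j} : (0,1] → ℝ is differentiable, strictly increasing, integrable near 0, with f_{i,j}(1) finite and lim_{q→0⁺} f_{i,j}(q) = −∞. Then for every c ∈ ℝ: (i) the infimum of Σ_{j=0}^J ρ_j(x_j) over all (x_0,…,x_J) ∈ (ℝ^I)^{J+1} with Σ_{j=0}^J x_j = c·e equals −c − min_{q ∈ Θ_I} Σ_{j=0}^J α_j(q); and (ii) if (x*_0,…,x*_J) attains this infimum, then for every j the supremum defining ρ_j(x*_j) is attained at the same point q* ∈ Θ_I, namely the unique minimizer of q ↦ Σ_{j=0}^J α_j(q) over Θ_I; equivalently, −∇ρ_j(x*_j) = q* for every j. In particular, the limiting price of the risk-measure-based market is p* = −∇ρ_0(y*) = arg min_{q ∈ Θ_I} Σ_{j=0}^J α_j(q), where y* = x*_0. -/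

import Mathlib

/-!
The aggregate penalty `Σⱼ αⱼ` is again separable, with strictly increasing marginals
`Gᵢ = Σⱼ fⱼᵢ`. It attains its minimum on the compact simplex at some `q*`; since `Gᵢ → -∞`
at `0⁺`, moving a little mass onto an empty coordinate would lower the penalty, so `q*` is
interior, and then moving mass between two coordinates shows that `Gᵢ(q*ᵢ)` does not depend
on `i`. Each `αⱼ` lies above its tangent planes, so such an interior critical point is the
unique minimizer.

For an allocation with `Σⱼ xⱼ = c·e`, evaluating each supremum at `q*` gives
`Σⱼ ρⱼ(xⱼ) ≥ -c - Σⱼ αⱼ(q*)`. Equality holds for `xⱼ = const - fⱼ(q*)`, since then the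
tangent inequality for `αⱼ` at `q*` says that `q*` solves the problem defining `ρⱼ(xⱼ)`.
At an optimal allocation all these inequalities are equalities, so `q*` attains every
supremum.
-/

/-- The probability simplex in `ℝ^I`. -/
def simplex (I : ℕ) : Set (Fin I → ℝ) := {q | (∀ i, 0 ≤ q i) ∧ ∑ i, q i = 1}

/-- `penaltyA f p = ∫₀^p f(s) ds`. -/
noncomputable def penaltyA (f : ℝ → ℝ) (p : ℝ) : ℝ := ∫ s in (0 : ℝ)..p, f s

/-- The separable penalty function `α(q) = Σᵢ ∫₀^{qᵢ} fᵢ`. -/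
noncomputable def pen (I : ℕ) (g : Fin I → ℝ → ℝ) (q : Fin I → ℝ) : ℝ :=
  ∑ i, penaltyA (g i) (q i)

/-- The risk measure `ρ(x) = sup_{q ∈ Θ_I} { -qᵀx - α(q) }`. -/
noncomputable def rho (I : ℕ) (f : Fin I → ℝ → ℝ) (x : Fin I → ℝ) : ℝ :=
  sSup {v : ℝ | ∃ q ∈ simplex I, v = -(∑ i, q i * x i) - pen I f q}

open MeasureTheory Set Filter Topology

section PenaltyA

variable {g : ℝ → ℝ} {a b : ℝ}

theorem intervalIntegrable_of_mem_Icc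
    (hint : ∀ p ∈ Icc (0 : ℝ) 1, IntervalIntegrable g volume 0 p)
    (ha : a ∈ Icc (0 : ℝ) 1) (hb : b ∈ Icc (0 : ℝ) 1) : IntervalIntegrable g volume a b :=
  (hint a ha).symm.trans (hint b hb)

theorem penaltyA_sub_penaltyA (hint : ∀ p ∈ Icc (0 : ℝ) 1, IntervalIntegrable g volume 0 p)
    (ha : a ∈ Icc (0 : ℝ) 1) (hb : b ∈ Icc (0 : ℝ) 1) :
    penaltyA g b - penaltyA g a = ∫ s in a..b, g s :=
  intervalIntegral.integral_interval_sub_left (hint b hb) (hint a ha)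

theorem continuousOn_penaltyA (hint : ∀ p ∈ Icc (0 : ℝ) 1, IntervalIntegrable g volume 0 p) :
    ContinuousOn (penaltyA g) (Icc 0 1) := by
  have := intervalIntegral.continuousOn_primitive_interval' (hint 1 ⟨zero_le_one, le_rfl⟩)
    (a := 0) (by simp)
  rwa [uIcc_of_le zero_le_one] at this

theorem penaltyA_add_sub_mul_le (hmono : StrictMonoOn g (Ioc 0 1))
    (hint : ∀ p ∈ Icc (0 : ℝ) 1, IntervalIntegrable g volume 0 p)
    (ha : a ∈ Ioc (0 : ℝ) 1) (hb : b ∈ Icc (0 : ℝ) 1) :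
    penaltyA g a + (b - a) * g a ≤ penaltyA g b := by
  have hab := intervalIntegrable_of_mem_Icc hint (Ioc_subset_Icc_self ha) hb
  suffices (b - a) * g a ≤ ∫ s in a..b, g s by
    linarith [penaltyA_sub_penaltyA hint (Ioc_subset_Icc_self ha) hb]
  rcases le_or_gt a b with hle | hlt
  · have := intervalIntegral.integral_mono_on_of_le_Ioo hle intervalIntegrable_const hab
      fun x hx => hmono.monotoneOn ha ⟨ha.1.trans hx.1, hx.2.le.trans hb.2⟩ hx.1.le
    simpa using this
  · have := intervalIntegral.integral_mono_on_of_le_Ioo hlt.le hab.symm intervalIntegrable_const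
      fun x hx => hmono.monotoneOn ⟨hb.1.trans_lt hx.1, hx.2.le.trans ha.2⟩ ha hx.2.le
    rw [intervalIntegral.integral_symm]
    simp only [intervalIntegral.integral_const, smul_eq_mul] at this
    linarith

theorem penaltyA_add_sub_mul_lt (hmono : StrictMonoOn g (Ioc 0 1))
    (hint : ∀ p ∈ Icc (0 : ℝ) 1, IntervalIntegrable g volume 0 p)
    (ha : a ∈ Ioc (0 : ℝ) 1) (hab : a < b) (hb : b ≤ 1) :
    penaltyA g a + (b - a) * g a < penaltyA g b := by
  obtain ⟨m, ham, hmb⟩ := exists_between hab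
  have hm : m ∈ Ioc (0 : ℝ) 1 := ⟨ha.1.trans ham, hmb.le.trans hb⟩
  have hle₁ := penaltyA_add_sub_mul_le hmono hint ha (Ioc_subset_Icc_self hm)
  have hle₂ := penaltyA_add_sub_mul_le hmono hint hm ⟨by linarith [ha.1], hb⟩
  have hlt : (b - m) * g a < (b - m) * g m :=
    mul_lt_mul_of_pos_left (hmono ha hm ham) (sub_pos.2 hmb)
  linarith

end PenaltyA

section Pen

variable {I : ℕ} {g : Fin I → ℝ → ℝ} {p q : Fin I → ℝ}

theorem mem_Icc_of_mem_simplex (hq : q ∈ simplex I) (i : Fin I) : q i ∈ Icc (0 : ℝ) 1 :=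
  ⟨hq.1 i, hq.2 ▸ Finset.single_le_sum (fun j _ => hq.1 j) (Finset.mem_univ i)⟩

theorem isCompact_simplex : IsCompact (simplex I) := isCompact_stdSimplex ℝ (Fin I)

theorem simplex_nonempty (hI : 0 < I) : (simplex I).Nonempty :=
  ⟨fun _ => (I : ℝ)⁻¹, fun _ => by positivity, by simp [Finset.card_univ]; field_simp⟩

theorem sum_sub_mul_eq_zero (hp : p ∈ simplex I) (hq : q ∈ simplex I) (l : ℝ) :
    ∑ i, (p i - q i) * l = 0 := by
  rw [← Finset.sum_mul, Finset.sum_sub_distrib, hp.2, hq.2, sub_self, zero_mul]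

theorem continuousOn_pen (hint : ∀ i, ∀ p ∈ Icc (0 : ℝ) 1, IntervalIntegrable (g i) volume 0 p) :
    ContinuousOn (pen I g) (simplex I) :=
  continuousOn_finsetSum _ fun i _ => (continuousOn_penaltyA (hint i)).comp
    (continuous_apply i).continuousOn fun _ hq => mem_Icc_of_mem_simplex hq i

theorem pen_add_sum_le (hmono : ∀ i, StrictMonoOn (g i) (Ioc 0 1))
    (hint : ∀ i, ∀ p ∈ Icc (0 : ℝ) 1, IntervalIntegrable (g i) volume 0 p)
    (hq : ∀ i, q i ∈ Ioc (0 : ℝ) 1) (hp : p ∈ simplex I) :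
    pen I g q + ∑ i, (p i - q i) * g i (q i) ≤ pen I g p := by
  rw [pen, pen, ← Finset.sum_add_distrib]
  exact Finset.sum_le_sum fun i _ =>
    penaltyA_add_sub_mul_le (hmono i) (hint i) (hq i) (mem_Icc_of_mem_simplex hp i)

theorem pen_add_sum_lt (hmono : ∀ i, StrictMonoOn (g i) (Ioc 0 1))
    (hint : ∀ i, ∀ p ∈ Icc (0 : ℝ) 1, IntervalIntegrable (g i) volume 0 p)
    (hq : q ∈ simplex I) (hq₀ : ∀ i, q i ∈ Ioc (0 : ℝ) 1)
    (hp : p ∈ simplex I) (hpq : p ≠ q) :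
    pen I g q + ∑ i, (p i - q i) * g i (q i) < pen I g p := by
  obtain ⟨k, hk⟩ : ∃ k, q k < p k := by
    by_contra! h
    exact hpq <| funext fun i => (Finset.sum_eq_sum_iff_of_le fun i _ => h i).mp
      (hp.2.trans hq.2.symm) i (Finset.mem_univ i)
  rw [pen, pen, ← Finset.sum_add_distrib]
  exact Finset.sum_lt_sum
    (fun i _ => penaltyA_add_sub_mul_le (hmono i) (hint i) (hq₀ i) (mem_Icc_of_mem_simplex hp i))
    ⟨k, Finset.mem_univ k,
      penaltyA_add_sub_mul_lt (hmono k) (hint k) (hq₀ k) hk (mem_Icc_of_mem_simplex hp k).2⟩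

theorem pen_lt_pen_of_apply_eq (hmono : ∀ i, StrictMonoOn (g i) (Ioc 0 1))
    (hint : ∀ i, ∀ p ∈ Icc (0 : ℝ) 1, IntervalIntegrable (g i) volume 0 p)
    (hq : q ∈ simplex I) (hq₀ : ∀ i, q i ∈ Ioc (0 : ℝ) 1) {l : ℝ}
    (hl : ∀ i, g i (q i) = l) (hp : p ∈ simplex I) (hpq : p ≠ q) : pen I g q < pen I g p := by
  have := pen_add_sum_lt hmono hint hq hq₀ hp hpq
  simp only [hl, sum_sub_mul_eq_zero hp hq, add_zero] at this
  exact this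

end Pen

section Transfer

variable {I : ℕ} {g : Fin I → ℝ → ℝ} {q : Fin I → ℝ} {k m : Fin I} {ε : ℝ}

def transferMass (q : Fin I → ℝ) (k m : Fin I) (ε : ℝ) : Fin I → ℝ :=
  q + Pi.single k ε - Pi.single m ε

theorem transferMass_apply_left (hkm : k ≠ m) : transferMass q k m ε k = q k + ε := by
  simp [transferMass, hkm]

theorem transferMass_apply_right (hkm : k ≠ m) : transferMass q k m ε m = q m - ε := by
  simp [transferMass, hkm.symm]

theorem transferMass_apply_of_ne {i : Fin I} (hik : i ≠ k) (him : i ≠ m) :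
    transferMass q k m ε i = q i := by
  simp [transferMass, hik, him]

theorem transferMass_mem_simplex (hq : q ∈ simplex I) (hkm : k ≠ m) (hε : 0 ≤ ε)
    (hεm : ε ≤ q m) : transferMass q k m ε ∈ simplex I := by
  refine ⟨fun i => ?_, ?_⟩
  · by_cases hik : i = k
    · subst hik; rw [transferMass_apply_left hkm]; linarith [hq.1 i]
    by_cases him : i = m
    · subst him; rw [transferMass_apply_right hkm]; linarith
    · rw [transferMass_apply_of_ne hik him]; exact hq.1 i
  · simp [transferMass, Finset.sum_sub_distrib, Finset.sum_add_distrib, hq.2]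

theorem pen_transferMass_sub_le (hmono : ∀ i, StrictMonoOn (g i) (Ioc 0 1))
    (hint : ∀ i, ∀ p ∈ Icc (0 : ℝ) 1, IntervalIntegrable (g i) volume 0 p)
    (hq : q ∈ simplex I) (hkm : k ≠ m) (hε : 0 < ε) (hεk : q k + ε ≤ 1) (hεm : ε < q m) :
    pen I g (transferMass q k m ε) - pen I g q ≤ ε * (g k (q k + ε) - g m (q m - ε)) := by
  rw [pen, pen, ← Finset.sum_sub_distrib, Fintype.sum_eq_add k m hkm fun i hi => by
    rw [transferMass_apply_of_ne hi.1 hi.2, sub_self], transferMass_apply_left hkm,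
    transferMass_apply_right hkm]
  have hk := penaltyA_add_sub_mul_le (hmono k) (hint k) ⟨by linarith [hq.1 k], hεk⟩
    (mem_Icc_of_mem_simplex hq k)
  have hm := penaltyA_add_sub_mul_le (hmono m) (hint m) (a := q m - ε) ⟨by linarith, by
    linarith [(mem_Icc_of_mem_simplex hq m).2]⟩ (mem_Icc_of_mem_simplex hq m)
  linarith

end Transfer

section Minimizer

variable {I : ℕ} {g : Fin I → ℝ → ℝ} {q : Fin I → ℝ}

theorem pos_of_isMinOn_pen (hmono : ∀ i, StrictMonoOn (g i) (Ioc 0 1))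
    (hlim : ∀ i, Tendsto (g i) (𝓝[>] 0) atBot)
    (hint : ∀ i, ∀ p ∈ Icc (0 : ℝ) 1, IntervalIntegrable (g i) volume 0 p)
    (hq : q ∈ simplex I) (hmin : IsMinOn (pen I g) (simplex I) q) (k : Fin I) : 0 < q k := by
  by_contra! hk
  have hk0 : q k = 0 := le_antisymm hk (hq.1 k)
  obtain ⟨m, hm⟩ : ∃ m, 0 < q m := by
    by_contra! h
    linarith [hq.2 ▸ Finset.sum_nonpos fun i (_ : i ∈ Finset.univ) => h i]
  have hkm : k ≠ m := by rintro rfl; linarith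
  obtain ⟨ε, hεg, hε⟩ := (((hlim k).eventually (eventually_lt_atBot (g m (q m / 2)))).and
    (Ioo_mem_nhdsGT (lt_min (half_pos hm) one_pos))).exists
  have hε₁ : ε < q m / 2 := hε.2.trans_le (min_le_left _ _)
  have hε₂ : ε < 1 := hε.2.trans_le (min_le_right _ _)
  have hdecr := pen_transferMass_sub_le hmono hint hq hkm hε.1 (by linarith) (by linarith)
  have hgm : g m (q m / 2) ≤ g m (q m - ε) :=
    (hmono m).monotoneOn ⟨half_pos hm, by linarith [(mem_Icc_of_mem_simplex hq m).2]⟩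
      ⟨by linarith, by linarith [(mem_Icc_of_mem_simplex hq m).2]⟩ (by linarith)
  have hneg : ε * (g k (q k + ε) - g m (q m - ε)) < 0 :=
    mul_neg_of_pos_of_neg hε.1 (by rw [hk0, zero_add]; linarith)
  linarith [isMinOn_iff.mp hmin _ (transferMass_mem_simplex hq hkm hε.1.le (by linarith))]

theorem lt_one_of_mem_simplex (hI : 1 < I) (hq : q ∈ simplex I) (hpos : ∀ i, 0 < q i)
    (i : Fin I) : q i < 1 := by
  obtain ⟨k, hki⟩ := Fintype.exists_ne_of_one_lt_card (by simpa using hI) i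
  have : q i + q k ≤ 1 := by
    rw [← hq.2, ← Finset.sum_pair hki.symm]
    exact Finset.sum_le_sum_of_subset_of_nonneg (Finset.subset_univ _) fun j _ _ => hq.1 j
  linarith [hpos k]

theorem apply_le_apply_of_isMinOn_pen (hmono : ∀ i, StrictMonoOn (g i) (Ioc 0 1))
    (hcont : ∀ i, ContinuousOn (g i) (Ioo 0 1))
    (hint : ∀ i, ∀ p ∈ Icc (0 : ℝ) 1, IntervalIntegrable (g i) volume 0 p)
    (hq : q ∈ simplex I) (hq₀ : ∀ i, q i ∈ Ioo (0 : ℝ) 1)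
    (hmin : IsMinOn (pen I g) (simplex I) q) (i k : Fin I) : g k (q k) ≤ g i (q i) := by
  rcases eq_or_ne i k with rfl | hik
  · rfl
  have hc : ∀ j, ContinuousAt (g j) (q j) := fun j =>
    (hcont j).continuousAt (Ioo_mem_nhds (hq₀ j).1 (hq₀ j).2)
  have hlim : Tendsto (fun ε => g i (q i + ε) - g k (q k - ε)) (𝓝[>] 0)
      (𝓝 (g i (q i) - g k (q k))) := by
    have hr : Tendsto (fun ε : ℝ => q i + ε) (𝓝 0) (𝓝 (q i)) := by
      simpa using (continuous_const_add (q i)).tendsto 0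
    have hl : Tendsto (fun ε : ℝ => q k - ε) (𝓝 0) (𝓝 (q k)) := by
      simpa using (continuous_sub_left (q k)).tendsto 0
    exact (((hc i).tendsto.comp hr).sub ((hc k).tendsto.comp hl)).mono_left nhdsWithin_le_nhds
  have hev : ∀ᶠ ε in 𝓝[>] 0, 0 ≤ g i (q i + ε) - g k (q k - ε) := by
    filter_upwards [Ioo_mem_nhdsGT (lt_min (hq₀ k).1 (sub_pos.2 (hq₀ i).2))] with ε hε
    have hε₁ : ε < q k := hε.2.trans_le (min_le_left _ _)
    have hε₂ : ε < 1 - q i := hε.2.trans_le (min_le_right _ _)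
    have hle := pen_transferMass_sub_le hmono hint hq hik hε.1 (by linarith) hε₁
    have hmin' := isMinOn_iff.mp hmin _ (transferMass_mem_simplex hq hik hε.1.le hε₁.le)
    exact nonneg_of_mul_nonneg_right (by linarith) hε.1
  exact sub_nonneg.mp (ge_of_tendsto hlim hev)

theorem exists_mem_simplex_apply_eq (hI : 1 < I) (hmono : ∀ i, StrictMonoOn (g i) (Ioc 0 1))
    (hcont : ∀ i, ContinuousOn (g i) (Ioo 0 1)) (hlim : ∀ i, Tendsto (g i) (𝓝[>] 0) atBot)
    (hint : ∀ i, ∀ p ∈ Icc (0 : ℝ) 1, IntervalIntegrable (g i) volume 0 p) :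
    ∃ q ∈ simplex I, (∀ i, q i ∈ Ioo (0 : ℝ) 1) ∧ ∃ l, ∀ i, g i (q i) = l := by
  obtain ⟨q, hq, hmin⟩ := isCompact_simplex.exists_isMinOn (simplex_nonempty (by omega))
    (continuousOn_pen hint)
  have hpos := pos_of_isMinOn_pen hmono hlim hint hq hmin
  have hq₀ : ∀ i, q i ∈ Ioo (0 : ℝ) 1 := fun i => ⟨hpos i, lt_one_of_mem_simplex hI hq hpos i⟩
  have hle := apply_le_apply_of_isMinOn_pen hmono hcont hint hq hq₀ hmin
  exact ⟨q, hq, hq₀, g ⟨0, by omega⟩ (q ⟨0, by omega⟩),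
    fun i => le_antisymm (hle _ _) (hle _ _)⟩

end Minimizer

section Aggregate

variable {ι α M : Type*} [AddCommMonoid M] [PartialOrder M] {s : Finset ι} {f : ι → α → M}

theorem strictMonoOn_finsetSum [Preorder α] [IsOrderedCancelAddMonoid M] {t : Set α}
    (hs : s.Nonempty) (h : ∀ j ∈ s, StrictMonoOn (f j) t) :
    StrictMonoOn (fun x => ∑ j ∈ s, f j x) t := by
  have := Finset.sum_induction_nonempty f (StrictMonoOn · t) (fun _ _ => StrictMonoOn.add) hs h
  rwa [Finset.sum_fn] at this

theorem tendsto_finsetSum_atBot [IsOrderedAddMonoid M] {l : Filter α} (hs : s.Nonempty)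
    (h : ∀ j ∈ s, Tendsto (f j) l atBot) : Tendsto (fun x => ∑ j ∈ s, f j x) l atBot := by
  have := Finset.sum_induction_nonempty f (Tendsto · l atBot)
    (fun _ _ => Tendsto.atBot_add_atBot) hs h
  rwa [Finset.sum_fn] at this

theorem sum_pen_eq_pen_sum [Fintype ι] {I : ℕ} {f : ι → Fin I → ℝ → ℝ} {q : Fin I → ℝ}
    (hint : ∀ j i, ∀ p ∈ Icc (0 : ℝ) 1, IntervalIntegrable (f j i) volume 0 p)
    (hq : q ∈ simplex I) :
    ∑ j, pen I (f j) q = pen I (fun i s => ∑ j, f j i s) q := by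
  simp only [pen, penaltyA]
  rw [Finset.sum_comm]
  refine Finset.sum_congr rfl fun i _ => ?_
  rw [intervalIntegral.integral_finsetSum fun j _ => hint j i _ (mem_Icc_of_mem_simplex hq i)]

end Aggregate

section RiskMeasure

variable {I : ℕ} {g : Fin I → ℝ → ℝ} {q x : Fin I → ℝ}

theorem bddAbove_rho_set (hcont : ContinuousOn (pen I g) (simplex I)) (x : Fin I → ℝ) :
    BddAbove {v : ℝ | ∃ q ∈ simplex I, v = -(∑ i, q i * x i) - pen I g q} := by
  have hobj : ContinuousOn (fun q : Fin I → ℝ => -(∑ i, q i * x i) - pen I g q) (simplex I) :=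
    (continuousOn_finsetSum _ fun i _ =>
      ((continuous_apply i).mul continuous_const).continuousOn).neg.sub hcont
  obtain ⟨C, hC⟩ := (isCompact_simplex.image_of_continuousOn hobj).bddAbove
  exact ⟨C, by rintro v ⟨q, hq, rfl⟩; exact hC ⟨q, hq, rfl⟩⟩

theorem le_rho (hcont : ContinuousOn (pen I g) (simplex I)) (hq : q ∈ simplex I) :
    -(∑ i, q i * x i) - pen I g q ≤ rho I g x :=
  le_csSup (bddAbove_rho_set hcont x) ⟨q, hq, rfl⟩

theorem isGreatest_of_rho_le (hcont : ContinuousOn (pen I g) (simplex I)) (hq : q ∈ simplex I)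
    (h : rho I g x ≤ -(∑ i, q i * x i) - pen I g q) :
    IsGreatest {v : ℝ | ∃ q ∈ simplex I, v = -(∑ i, q i * x i) - pen I g q}
      (-(∑ i, q i * x i) - pen I g q) :=
  ⟨⟨q, hq, rfl⟩, fun _ hv => (le_csSup (bddAbove_rho_set hcont x) hv).trans h⟩

theorem isGreatest_of_add_apply_eq (hmono : ∀ i, StrictMonoOn (g i) (Ioc 0 1))
    (hint : ∀ i, ∀ p ∈ Icc (0 : ℝ) 1, IntervalIntegrable (g i) volume 0 p)
    (hq : q ∈ simplex I) (hq₀ : ∀ i, q i ∈ Ioc (0 : ℝ) 1) {l : ℝ}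
    (hx : ∀ i, x i + g i (q i) = l) :
    IsGreatest {v : ℝ | ∃ q ∈ simplex I, v = -(∑ i, q i * x i) - pen I g q}
      (-(∑ i, q i * x i) - pen I g q) := by
  refine ⟨⟨q, hq, rfl⟩, ?_⟩
  rintro v ⟨p, hp, rfl⟩
  have htan := pen_add_sum_le hmono hint hq₀ hp
  have hg : ∀ i, g i (q i) = l - x i := fun i => by linarith [hx i]
  have hsum : ∑ i, (p i - q i) * g i (q i) = ∑ i, q i * x i - ∑ i, p i * x i := by
    calc ∑ i, (p i - q i) * g i (q i) = ∑ i, ((p i - q i) * l - (p i * x i - q i * x i)) :=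
          Finset.sum_congr rfl fun i _ => by rw [hg]; ring
      _ = ∑ i, q i * x i - ∑ i, p i * x i := by
          rw [Finset.sum_sub_distrib, sum_sub_mul_eq_zero hp hq, Finset.sum_sub_distrib]; ring
  linarith

end RiskMeasure

section Market

variable {ι : Type*} [Fintype ι] {I : ℕ} {f : ι → Fin I → ℝ → ℝ} {q : Fin I → ℝ} {c : ℝ}

theorem sum_neg_sum_mul_sub_pen (hq : q ∈ simplex I) {xs : ι → Fin I → ℝ}
    (hxs : ∑ j, xs j = c • (1 : Fin I → ℝ)) :
    ∑ j, (-(∑ i, q i * xs j i) - pen I (f j) q) = -c - ∑ j, pen I (f j) q := by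
  have hxi : ∀ i, ∑ j, xs j i = c := fun i => by simpa using congrFun hxs i
  rw [Finset.sum_sub_distrib, Finset.sum_neg_distrib, Finset.sum_comm]
  simp_rw [← Finset.mul_sum, hxi, ← Finset.sum_mul, hq.2, one_mul]

/-- The allocation `xs j = (c + l) / |ι| - f j (q)` attains the lower bound. -/
theorem isGLB_sum_rho [Nonempty ι] (hmono : ∀ j i, StrictMonoOn (f j i) (Ioc 0 1))
    (hint : ∀ j i, ∀ p ∈ Icc (0 : ℝ) 1, IntervalIntegrable (f j i) volume 0 p)
    (hq : q ∈ simplex I) (hq₀ : ∀ i, q i ∈ Ioc (0 : ℝ) 1) {l : ℝ}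
    (hl : ∀ i, ∑ j, f j i (q i) = l) :
    IsGLB {v : ℝ | ∃ xs : ι → Fin I → ℝ,
        (∑ j, xs j) = c • (1 : Fin I → ℝ) ∧ v = ∑ j, rho I (f j) (xs j)}
      (-c - ∑ j, pen I (f j) q) := by
  refine ⟨?_, fun b hb => ?_⟩
  · rintro v ⟨xs, hxs, rfl⟩
    rw [← sum_neg_sum_mul_sub_pen hq hxs]
    exact Finset.sum_le_sum fun j _ => le_rho (continuousOn_pen (hint j)) hq
  set xs : ι → Fin I → ℝ := fun j i => (c + l) / Fintype.card ι - f j i (q i)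
  have hxs : ∑ j, xs j = c • (1 : Fin I → ℝ) := by
    funext i
    have hcard : (Fintype.card ι : ℝ) ≠ 0 := Nat.cast_ne_zero.2 Fintype.card_ne_zero
    simp [xs, Finset.sum_sub_distrib, hl i]
    field_simp
    ring
  refine (hb ⟨xs, hxs, rfl⟩).trans_eq ?_
  rw [← sum_neg_sum_mul_sub_pen hq hxs]
  refine Finset.sum_congr rfl fun j _ => ?_
  exact (isGreatest_of_add_apply_eq (hmono j) (hint j) hq hq₀
    (l := (c + l) / Fintype.card ι) fun i => sub_add_cancel _ _).csSup_eq

theorem isGreatest_of_sum_rho_eq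
    (hint : ∀ j i, ∀ p ∈ Icc (0 : ℝ) 1, IntervalIntegrable (f j i) volume 0 p)
    (hq : q ∈ simplex I) {xs : ι → Fin I → ℝ} (hxs : ∑ j, xs j = c • (1 : Fin I → ℝ))
    (hopt : ∑ j, rho I (f j) (xs j) = -c - ∑ j, pen I (f j) q) (j : ι) :
    IsGreatest {v : ℝ | ∃ q ∈ simplex I, v = -(∑ i, q i * xs j i) - pen I (f j) q}
      (-(∑ i, q i * xs j i) - pen I (f j) q) := by
  have hle : ∀ j ∈ Finset.univ, -(∑ i, q i * xs j i) - pen I (f j) q ≤ rho I (f j) (xs j) :=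
    fun j _ => le_rho (continuousOn_pen (hint j)) hq
  have heq := (Finset.sum_eq_sum_iff_of_le hle).mp (by rw [sum_neg_sum_mul_sub_pen hq hxs, hopt])
  exact isGreatest_of_rho_le (continuousOn_pen (hint j)) hq (heq j (Finset.mem_univ j)).ge

end Market

/-- In a risk-measure-based market, the minimal aggregate risk subject to
total wealth `c·e` equals `-c - min_q Σⱼ αⱼ(q)`, and at any optimal allocation every
risk measure's defining supremum is attained at the same unique minimizer `q*`, which
is the limiting price. -/
theorem stmt_11 (I J : ℕ) (hI : 2 ≤ I) (f : Fin (J + 1) → Fin I → ℝ → ℝ)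
    (hdiff : ∀ j i, DifferentiableOn ℝ (f j i) (Set.Ioc (0 : ℝ) 1))
    (hmono : ∀ j i, StrictMonoOn (f j i) (Set.Ioc (0 : ℝ) 1))
    (hlim : ∀ j i, Filter.Tendsto (f j i) (nhdsWithin 0 (Set.Ioi 0)) Filter.atBot)
    (hint : ∀ j i, ∀ p ∈ Set.Icc (0 : ℝ) 1,
      IntervalIntegrable (f j i) MeasureTheory.volume 0 p)
    (c : ℝ) :
    ∃ qstar ∈ simplex I,
      -- `qstar` is the unique minimizer of the aggregate penalty
      (∀ q ∈ simplex I, (∑ j, pen I (f j) qstar) ≤ ∑ j, pen I (f j) q) ∧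
      (∀ q ∈ simplex I, (∑ j, pen I (f j) q) = (∑ j, pen I (f j) qstar) → q = qstar) ∧
      -- (i) value of the infimum of the aggregate risk
      IsGLB {v : ℝ | ∃ xs : Fin (J + 1) → Fin I → ℝ,
          (∑ j, xs j) = c • (1 : Fin I → ℝ) ∧ v = ∑ j, rho I (f j) (xs j)}
        (-c - ∑ j, pen I (f j) qstar) ∧
      -- (ii) at any optimal allocation each supremum is attained at `qstar`
      (∀ xs : Fin (J + 1) → Fin I → ℝ, (∑ j, xs j) = c • (1 : Fin I → ℝ) →
        (∑ j, rho I (f j) (xs j)) = -c - ∑ j, pen I (f j) qstar →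
        ∀ j, IsGreatest {v : ℝ | ∃ q ∈ simplex I, v = -(∑ i, q i * xs j i) - pen I (f j) q}
          (-(∑ i, qstar i * xs j i) - pen I (f j) qstar)) := by
  set G : Fin I → ℝ → ℝ := fun i s => ∑ j, f j i s
  have hGmono : ∀ i, StrictMonoOn (G i) (Ioc 0 1) := fun i =>
    strictMonoOn_finsetSum Finset.univ_nonempty fun j _ => hmono j i
  have hGint : ∀ i, ∀ p ∈ Icc (0 : ℝ) 1, IntervalIntegrable (G i) volume 0 p := fun i p hp => by
    simpa [G, ← Finset.sum_fn] using IntervalIntegrable.sum Finset.univ fun j _ => hint j i p hp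
  obtain ⟨q, hq, hq₀, l, hl⟩ := exists_mem_simplex_apply_eq hI hGmono
    (fun i => continuousOn_finsetSum _ fun j _ => (hdiff j i).continuousOn.mono Ioo_subset_Ioc_self)
    (fun i => tendsto_finsetSum_atBot Finset.univ_nonempty fun j _ => hlim j i) hGint
  have hq₀' : ∀ i, q i ∈ Ioc (0 : ℝ) 1 := fun i => Ioo_subset_Ioc_self (hq₀ i)
  have hunique : ∀ p ∈ simplex I, p ≠ q → ∑ j, pen I (f j) q < ∑ j, pen I (f j) p :=
    fun p hp hpq => by
      rw [sum_pen_eq_pen_sum hint hq, sum_pen_eq_pen_sum hint hp]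
      exact pen_lt_pen_of_apply_eq hGmono hGint hq hq₀' hl hp hpq
  refine ⟨q, hq, fun p hp => ?_, fun p hp heq => ?_, isGLB_sum_rho hmono hint hq hq₀' hl,
    fun xs hxs hopt => isGreatest_of_sum_rho_eq hint hq hxs hopt⟩
  · rcases eq_or_ne p q with rfl | hpq
    exacts [le_rfl, (hunique p hp hpq).le]
  · by_contra hpq
    exact (hunique p hp hpq).ne' heq
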